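/- arXiv:0811.1522 — 5 statements merged into one kernel-verified Lean document; each statement's English description precedes it below -/
import Mathlib

section
/- Let k be a field, G a finite group, and M a finite-dimensional kG-module that is indecomposable and not semisimple. Suppose M is self-dual, i.e. M is isomorphic as a kG-module to its dual M* = Hom_k(M, k) equipped with the contragredient action (g·f)(m) = f(g⁻¹·m). Let I be a simple kG-submodule of M that is self-dual (I ≅ I* with the contragredient action). Then the multiplicity of I as a composition factor of M is at least 2; that is, every composition series of M has at least two factors isomorphic to I. -/
/-!
Self-duality of `M` and of `I` turns the inclusion `ι : I ↪ M` into a surjection `q : M ↠ I`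
(dualize `ι` and compose with the two self-dualities). By Schur, `q ∘ ι` is zero or an
isomorphism; in the latter case `M = ι(I) ⊕ ker q`, which is excluded since `M` is indecomposable
and not simple. Hence `0 < ι(I) ≤ ker q < M` with `ι(I)` an atom and `ker q` a coatom, and in any
composition series the step at which `ι(I)` is first reached and the step at which `ker q` is
last left are two different factors, both isomorphic to `I` by the second isomorphism theorem.
-/

theorem Fin.exists_not_castSucc_and_succ {n : ℕ} {P : Fin (n + 1) → Prop} (h₀ : ¬ P 0)
    (hn : P (Fin.last n)) : ∃ i : Fin n, ¬ P i.castSucc ∧ P i.succ := by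
  by_contra! h
  exact Fin.induction h₀ h (Fin.last n) hn

namespace CompositionSeries

open JordanHolderLattice

variable {X : Type*} [Lattice X] [IsModularLattice X] (s : CompositionSeries X)

theorem sup_eq_succ_of_not_le_of_le {a : X} {i : Fin s.length} (h₁ : ¬ a ≤ s i.castSucc)
    (h₂ : a ≤ s i.succ) : s i.castSucc ⊔ a = s i.succ :=
  ((s.step i).eq_or_eq le_sup_left (sup_le (s.step i).le h₂)).resolve_left
    fun h => h₁ (h ▸ le_sup_right)

theorem iso_bot_of_not_le_of_le [OrderBot X] {a : X} (ha : IsAtom a) {i : Fin s.length}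
    (h₁ : ¬ a ≤ s i.castSucc) (h₂ : a ≤ s i.succ) : Iso (s i.castSucc, s i.succ) (⊥, a) :=
  second_iso_of_eq (s.step i) (s.sup_eq_succ_of_not_le_of_le h₁ h₂)
    ((ha.not_le_iff_disjoint.1 h₁).symm.eq_bot)

theorem iso_top_of_le_of_not_le [OrderTop X] {c : X} (hc : IsCoatom c) {i : Fin s.length}
    (h₁ : s i.castSucc ≤ c) (h₂ : ¬ s i.succ ≤ c) : Iso (s i.castSucc, s i.succ) (c, ⊤) :=
  iso_symm <| second_iso_of_eq hc.covBy_top (hc.not_le_iff_codisjoint.1 h₂).eq_top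
    (((s.step i).eq_or_eq (le_inf h₁ (s.step i).le) inf_le_right).resolve_right
      fun h => h₂ (h ▸ inf_le_left))

theorem exists_ne_iso_bot_of_isAtom_and_iso_top_of_isCoatom [BoundedOrder X]
    (h₀ : s.head = ⊥) (h₁ : s.last = ⊤) {a c : X} (ha : IsAtom a) (hc : IsCoatom c)
    (hac : a ≤ c) : ∃ i j : Fin s.length, i ≠ j ∧
      Iso (s i.castSucc, s i.succ) (⊥, a) ∧ Iso (s j.castSucc, s j.succ) (c, ⊤) := by
  have hs₀ : s 0 = ⊥ := h₀
  have hs₁ : s (Fin.last _) = ⊤ := h₁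
  obtain ⟨i, hi₁, hi₂⟩ := Fin.exists_not_castSucc_and_succ (P := (a ≤ s ·))
    (by simpa [hs₀] using ha.ne_bot) (by simp [hs₁])
  obtain ⟨j, hj₁, hj₂⟩ := Fin.exists_not_castSucc_and_succ (P := (¬ s · ≤ c))
    (by simp [hs₀]) (by simpa [hs₁] using hc.ne_top)
  rw [not_not] at hj₁
  refine ⟨i, j, ?_, s.iso_bot_of_not_le_of_le ha hi₁ hi₂, s.iso_top_of_le_of_not_le hc hj₁ hj₂⟩
  rintro rfl
  exact hj₂ (s.sup_eq_succ_of_not_le_of_le hi₁ hi₂ ▸ sup_le hj₁ hac)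

end CompositionSeries

namespace Submodule

variable {R M : Type*} [Ring R] [AddCommGroup M] [Module R M]

noncomputable def quotientComapBotEquiv (p : Submodule R M) :
    (↥p ⧸ comap p.subtype (⊥ : Submodule R M)) ≃ₗ[R] p :=
  quotEquivOfEqBot _ (by simp)

noncomputable def quotientComapTopEquiv (p : Submodule R M) :
    (↥(⊤ : Submodule R M) ⧸ comap (⊤ : Submodule R M).subtype p) ≃ₗ[R] M ⧸ p :=
  Quotient.equiv _ _ topEquiv (by ext; simp)

end Submodule

namespace LinearMap

variable {R M N : Type*} [Ring R] [AddCommGroup M] [Module R M] [AddCommGroup N] [Module R N]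

theorem isCompl_range_ker_of_bijective_comp {ι : N →ₗ[R] M} {q : M →ₗ[R] N}
    (h : Function.Bijective (q ∘ₗ ι)) : IsCompl (range ι) (ker q) := by
  let e := LinearEquiv.ofBijective _ h
  let π : M →ₗ[R] range ι := (LinearEquiv.ofInjective ι (coe_comp q ι ▸ h.1).of_comp).toLinearMap
    ∘ₗ e.symm.toLinearMap ∘ₗ q
  have hker : ker π = ker q := by simp only [π, LinearEquiv.ker_comp]
  refine hker ▸ isCompl_of_proj fun ⟨_, y, rfl⟩ => ?_
  ext
  simpa [π, e] using congrArg ι (e.symm_apply_apply y)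

theorem range_le_ker_of_indecomposable [IsSimpleModule R N]
    (hM : ∀ p q : Submodule R M, IsCompl p q → p = ⊥ ∨ q = ⊥) (hM' : ¬ IsSimpleModule R M)
    {ι : N →ₗ[R] M} (hι : Function.Injective ι) {q : M →ₗ[R] N} (hq : Function.Surjective q) :
    range ι ≤ ker q := by
  rw [range_le_ker_iff]
  by_contra hne
  rcases hM _ _ (isCompl_range_ker_of_bijective_comp
    ((q ∘ₗ ι).bijective_or_eq_zero.resolve_right hne)) with h | h
  · obtain ⟨x, y, hxy⟩ := (IsSimpleModule.nontrivial R N).exists_pair_ne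
    exact hxy (hι (by simp [range_eq_bot.1 h]))
  · exact hM' (IsSimpleModule.congr (LinearEquiv.ofBijective q ⟨ker_eq_bot.1 h, hq⟩))

end LinearMap

namespace Representation

section

variable {k G V W : Type*} [CommSemiring k] [Group G] [AddCommMonoid V] [Module k V]
  [AddCommMonoid W] [Module k W] {ρ : Representation k G V} {σ : Representation k G W}

def IntertwiningMap.dualMap (f : IntertwiningMap ρ σ) : IntertwiningMap σ.dual ρ.dual :=
  f.toLinearMap.dualMap.intertwiningMap_of_isIntertwiningMap _ _ fun g φ => by
    ext v
    simp [Module.Dual.transpose_apply, LinearMap.dualMap_apply, ← f.isIntertwining]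

end

variable {k G V W : Type*} [Field k] [Group G] [AddCommGroup V] [Module k V]
  [AddCommGroup W] [Module k W] {ρ : Representation k G V} {σ : Representation k G W}

theorem exists_surjective_of_injective_of_selfDual (eρ : ρ.Equiv ρ.dual) (eσ : σ.Equiv σ.dual)
    (ι : IntertwiningMap σ ρ) (hι : Function.Injective ι) :
    ∃ q : IntertwiningMap ρ σ, Function.Surjective q :=
  ⟨eσ.symm.toIntertwiningMap.comp (ι.dualMap.comp eρ.toIntertwiningMap),
    eσ.symm.surjective.comp ((LinearMap.dualMap_surjective_of_injective hι).comp eρ.surjective)⟩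

end Representation

theorem selfdual_simple_submodule_multiplicity_ge_two_general
    (k G V W : Type*) [Field k] [Group G]
    [AddCommGroup V] [Module k V]
    [AddCommGroup W] [Module k W]
    (ρ : Representation k G V) (σ : Representation k G W)
    -- `M` is nonzero and indecomposable …
    (hM_indec : ∀ p q : Submodule (MonoidAlgebra k G) ρ.asModule,
      IsCompl p q → p = ⊥ ∨ q = ⊥)
    -- … and not semisimple
    (hM_not_ss : ¬ IsSemisimpleModule (MonoidAlgebra k G) ρ.asModule)
    -- `M` is self-dual (with the contragredient action on the dual)
    (hM_selfdual : ∃ e : V ≃ₗ[k] Module.Dual k V,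
      ∀ (g : G) (v : V), e (ρ g v) = ρ.dual g (e v))
    -- `I` is simple …
    (hI_simple : IsSimpleModule (MonoidAlgebra k G) σ.asModule)
    -- … self-dual …
    (hI_selfdual : ∃ e : W ≃ₗ[k] Module.Dual k W,
      ∀ (g : G) (w : W), e (σ g w) = σ.dual g (e w))
    -- … and a submodule of `M`
    (ι : W →ₗ[k] V) (hι_inj : Function.Injective ι)
    (hι_equivariant : ∀ (g : G) (w : W), ι (σ g w) = ρ g (ι w)) :
    -- every composition series of `M` has at least two factors isomorphic to `I`
    ∀ s : CompositionSeries (Submodule (MonoidAlgebra k G) ρ.asModule),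
      s.head = ⊥ → s.last = ⊤ →
      ∃ i j : Fin s.length, i ≠ j ∧
        Nonempty ((↥(s i.succ) ⧸
            (Submodule.comap (s i.succ).subtype (s i.castSucc)))
          ≃ₗ[MonoidAlgebra k G] σ.asModule) ∧
        Nonempty ((↥(s j.succ) ⧸
            (Submodule.comap (s j.succ).subtype (s j.castSucc)))
          ≃ₗ[MonoidAlgebra k G] σ.asModule) := by
  intro s hs₀ hs₁
  obtain ⟨eV, heV⟩ := hM_selfdual
  obtain ⟨eW, heW⟩ := hI_selfdual
  let ιG := ι.intertwiningMap_of_isIntertwiningMap σ ρ hι_equivariant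
  obtain ⟨q, hq⟩ := Representation.exists_surjective_of_injective_of_selfDual
    (.mk eV fun g => LinearMap.ext (heV g)) (.mk eW fun g => LinearMap.ext (heW g)) ιG hι_inj
  let ι' := Representation.IntertwiningMap.equivLinearMapAsModule σ ρ ιG
  let q' := Representation.IntertwiningMap.equivLinearMapAsModule ρ σ q
  have hι' : Function.Injective ι' := hι_inj
  have hq' : Function.Surjective q' := hq
  obtain ⟨i, j, hij, hi, hj⟩ := s.exists_ne_iso_bot_of_isAtom_and_iso_top_of_isCoatom hs₀ hs₁
    (isSimpleModule_iff_isAtom.1 (IsSimpleModule.congr (LinearEquiv.ofInjective ι' hι').symm))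
    (LinearMap.isCoatom_ker_of_surjective hq')
    (LinearMap.range_le_ker_of_indecomposable hM_indec (fun _ => hM_not_ss inferInstance) hι' hq')
  exact ⟨i, j, hij,
    ⟨hi.linearEquiv ≪≫ₗ (LinearMap.range ι').quotientComapBotEquiv ≪≫ₗ
      (LinearEquiv.ofInjective ι' hι').symm⟩,
    ⟨hj.linearEquiv ≪≫ₗ
      (LinearMap.ker q').quotientComapTopEquiv ≪≫ₗ q'.quotKerEquivOfSurjective hq'⟩⟩

/-- Let `k` be a field, `G` a finite group, and `M` a finite-dimensional `kG`-module
(given by a representation `ρ` of `G` on `V`, with `M = ρ.asModule` the corresponding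
module over the group algebra `MonoidAlgebra k G`) which is indecomposable and not
semisimple.  Suppose `M` is self-dual, i.e. there is a `k`-linear isomorphism of `V` with
its dual `Hom_k(V, k)` intertwining `ρ` with the contragredient representation `ρ.dual`.
Let `I` be a simple self-dual `kG`-submodule of `M` (given by a representation `σ` of `G`
on `W` together with an injective `G`-equivariant `k`-linear map `ι : W →ₗ[k] V`).
Then the multiplicity of `I` as a composition factor of `M` is at least `2`: every
composition series of `M` has at least two factors isomorphic to `I`. -/
theorem selfdual_simple_submodule_multiplicity_ge_two
    (k G V W : Type*) [Field k] [Group G] [Finite G]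
    [AddCommGroup V] [Module k V] [FiniteDimensional k V]
    [AddCommGroup W] [Module k W]
    (ρ : Representation k G V) (σ : Representation k G W)
    -- `M` is nonzero and indecomposable …
    (hM_nontrivial : Nontrivial V)
    (hM_indec : ∀ p q : Submodule (MonoidAlgebra k G) ρ.asModule,
      IsCompl p q → p = ⊥ ∨ q = ⊥)
    -- … and not semisimple
    (hM_not_ss : ¬ IsSemisimpleModule (MonoidAlgebra k G) ρ.asModule)
    -- `M` is self-dual (with the contragredient action on the dual)
    (hM_selfdual : ∃ e : V ≃ₗ[k] Module.Dual k V,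
      ∀ (g : G) (v : V), e (ρ g v) = ρ.dual g (e v))
    -- `I` is simple …
    (hI_simple : IsSimpleModule (MonoidAlgebra k G) σ.asModule)
    -- … self-dual …
    (hI_selfdual : ∃ e : W ≃ₗ[k] Module.Dual k W,
      ∀ (g : G) (w : W), e (σ g w) = σ.dual g (e w))
    -- … and a submodule of `M`
    (ι : W →ₗ[k] V) (hι_inj : Function.Injective ι)
    (hι_equivariant : ∀ (g : G) (w : W), ι (σ g w) = ρ g (ι w)) :
    -- every composition series of `M` has at least two factors isomorphic to `I`
    ∀ s : CompositionSeries (Submodule (MonoidAlgebra k G) ρ.asModule),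
      s.head = ⊥ → s.last = ⊤ →
      ∃ i j : Fin s.length, i ≠ j ∧
        Nonempty ((↥(s i.succ) ⧸
            (Submodule.comap (s i.succ).subtype (s i.castSucc)))
          ≃ₗ[MonoidAlgebra k G] σ.asModule) ∧
        Nonempty ((↥(s j.succ) ⧸
            (Submodule.comap (s j.succ).subtype (s j.castSucc)))
          ≃ₗ[MonoidAlgebra k G] σ.asModule) :=
  selfdual_simple_submodule_multiplicity_ge_two_general k G V W ρ σ hM_indec hM_not_ss hM_selfdual
    hI_simple hI_selfdual ι hι_inj hι_equivariant
end

section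
/- Let d ≥ 4. The five groups (a) D_{2^d} × C₂, (b) the central product D_{2^d} ∘ C₄, (c) the dihedral group of order 2^{d+1}, (d) the semidihedral group SD_{2^{d+1}} = ⟨x, y ∣ x^{2^d} = y² = 1, y x y⁻¹ = x^{2^{d−1}−1}⟩, and (e) C_{2^{d−1}} ⋊ (C₂ × C₂) = ⟨s, t, e ∣ s^{2^{d−1}} = t² = e² = 1, te = et, t s t⁻¹ = s⁻¹, e s e⁻¹ = s^{2^{d−2}+1}⟩ are pairwise non-isomorphic, and each of them contains a subgroup of index 2 isomorphic to the dihedral group D_{2^d} of order 2^d. -/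
/-- The units of `ZMod q` act by multiplication; multiplicatively this gives
`(ZMod q)ˣ →* MulAut (Multiplicative (ZMod q))`. -/
def zmodUnitsToMulAut (q : ℕ) : (ZMod q)ˣ →* MulAut (Multiplicative (ZMod q)) where
  toFun u := AddEquiv.toMultiplicative (DistribMulAction.toAddAut (ZMod q)ˣ (ZMod q) u)
  map_one' := by
    ext x
    simp [AddEquiv.toMultiplicative]
  map_mul' u v := by
    ext x
    simp [AddEquiv.toMultiplicative, mul_smul]

/-- The homomorphism from the cyclic group of order `2` sending the generator to a
given element `z` with `z ^ 2 = 1`. -/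
def c2hom {G : Type*} [Group G] (z : G) (hz : z ^ 2 = 1) : Multiplicative (ZMod 2) →* G where
  toFun a := z ^ (Multiplicative.toAdd a).val
  map_one' := by simp
  map_mul' a b := by
    show z ^ (Multiplicative.toAdd (a * b)).val = _
    rw [toAdd_mul, ZMod.val_add, ← pow_eq_pow_mod _ hz, pow_add]

lemma zmod_two_pow_self (n : ℕ) : (2 : ZMod (2 ^ n)) ^ n = 0 := by
  have h := ZMod.natCast_self (2 ^ n)
  push_cast at h
  exact h

lemma sd_val_sq (d : ℕ) (hd : 2 ≤ d) :
    ((2 : ZMod (2 ^ d)) ^ (d - 1) - 1) * ((2 : ZMod (2 ^ d)) ^ (d - 1) - 1) = 1 := by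
  have h0 : (2 : ZMod (2 ^ d)) ^ d = 0 := zmod_two_pow_self d
  have e1 : ((2 : ZMod (2 ^ d)) ^ (d - 1) - 1) * ((2 : ZMod (2 ^ d)) ^ (d - 1) - 1)
      = (2 : ZMod (2 ^ d)) ^ (d - 1) * (2 : ZMod (2 ^ d)) ^ (d - 1)
        - (2 : ZMod (2 ^ d)) * (2 : ZMod (2 ^ d)) ^ (d - 1) + 1 := by ring
  have e2 : (2 : ZMod (2 ^ d)) ^ (d - 1) * (2 : ZMod (2 ^ d)) ^ (d - 1)
      = (2 : ZMod (2 ^ d)) ^ (d - 2) * (2 : ZMod (2 ^ d)) ^ d := by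
    rw [← pow_add, ← pow_add]; congr 1; omega
  have e3 : (2 : ZMod (2 ^ d)) * (2 : ZMod (2 ^ d)) ^ (d - 1) = (2 : ZMod (2 ^ d)) ^ d := by
    rw [← pow_succ']; congr 1; omega
  rw [e1, e2, e3, h0, mul_zero, sub_zero, zero_add]

/-- The unit `2^(d-1) - 1` of `ZMod (2^d)`. -/
def sdUnit (d : ℕ) (hd : 2 ≤ d) : (ZMod (2 ^ d))ˣ :=
  ⟨(2 : ZMod (2 ^ d)) ^ (d - 1) - 1, (2 : ZMod (2 ^ d)) ^ (d - 1) - 1,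
    sd_val_sq d hd, sd_val_sq d hd⟩

lemma sdUnit_sq (d : ℕ) (hd : 2 ≤ d) : (sdUnit d hd) ^ 2 = 1 := by
  ext
  rw [Units.val_pow_eq_pow_val, Units.val_one, pow_two]
  exact sd_val_sq d hd

/-- The semidihedral group of order `2^(d+1)`:
`⟨x, y ∣ x^(2^d) = y² = 1, y x y⁻¹ = x^(2^(d-1) - 1)⟩`, realized as the semidirect
product of the cyclic group of order `2^d` by the cyclic group of order `2`, the
generator of the latter acting as multiplication by `2^(d-1) - 1`. -/
abbrev SemidihedralGroup (d : ℕ) (hd : 2 ≤ d) : Type :=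
  Multiplicative (ZMod (2 ^ d)) ⋊[(zmodUnitsToMulAut (2 ^ d)).comp
    (c2hom (sdUnit d hd) (sdUnit_sq d hd))] Multiplicative (ZMod 2)

/-- Group (a): the direct product `D_{2^d} × C₂`. -/
abbrev GroupA (d : ℕ) : Type := DihedralGroup (2 ^ (d - 1)) × Multiplicative (ZMod 2)

/-- The element `(s₁, c²)` of `D_{2^d} × C₄`, where `s₁` is the central involution of the
dihedral group and `c` generates `C₄`. -/
def cpGen (d : ℕ) : DihedralGroup (2 ^ (d - 1)) × Multiplicative (ZMod 4) :=
  (DihedralGroup.r ((2 ^ (d - 2) : ℕ) : ZMod (2 ^ (d - 1))), Multiplicative.ofAdd (2 : ZMod 4))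

lemma half_add_half (d : ℕ) :
    ((2 ^ (d - 2) : ℕ) : ZMod (2 ^ (d - 1))) + ((2 ^ (d - 2) : ℕ) : ZMod (2 ^ (d - 1))) = 0 := by
  match d with
  | 0 => decide
  | 1 => decide
  | (n + 2) =>
    show ((2 ^ n : ℕ) : ZMod (2 ^ (n + 1))) + ((2 ^ n : ℕ) : ZMod (2 ^ (n + 1))) = 0
    rw [← Nat.cast_add, show 2 ^ n + 2 ^ n = 2 ^ (n + 1) by ring, ZMod.natCast_self]

lemma cpGen_mem_center (d : ℕ) :
    cpGen d ∈ Subgroup.center (DihedralGroup (2 ^ (d - 1)) × Multiplicative (ZMod 4)) := by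
  rw [Subgroup.mem_center_iff]
  rintro ⟨g, c⟩
  refine Prod.ext ?_ (mul_comm _ _)
  show g * DihedralGroup.r _ = DihedralGroup.r _ * g
  have h := half_add_half d
  cases g with
  | r j => rw [DihedralGroup.r_mul_r, DihedralGroup.r_mul_r, add_comm]
  | sr j =>
    rw [DihedralGroup.sr_mul_r, DihedralGroup.r_mul_sr]
    congr 1
    rw [eq_comm, sub_eq_iff_eq_add, add_assoc, h, add_zero]

instance cpGen_zpowers_normal (d : ℕ) : (Subgroup.zpowers (cpGen d)).Normal := by
  constructor
  intro n hn g
  obtain ⟨k, rfl⟩ := hn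
  have hc : (cpGen d) ^ k ∈
      Subgroup.center (DihedralGroup (2 ^ (d - 1)) × Multiplicative (ZMod 4)) :=
    Subgroup.zpow_mem _ (cpGen_mem_center d) k
  have h := (Subgroup.mem_center_iff.mp hc) g
  have : g * (cpGen d) ^ k * g⁻¹ = (cpGen d) ^ k := by
    rw [h, mul_assoc, mul_inv_cancel, mul_one]
  rw [this]
  exact Subgroup.zpow_mem _ (Subgroup.mem_zpowers _) k

/-- Group (b): the central product `D_{2^d} ∘ C₄`, i.e. the quotient of `D_{2^d} × C₄`
by the order-2 subgroup generated by `(s₁, c²)`. -/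
abbrev GroupB (d : ℕ) : Type :=
  (DihedralGroup (2 ^ (d - 1)) × Multiplicative (ZMod 4)) ⧸ Subgroup.zpowers (cpGen d)

lemma ge_val_sq (d : ℕ) (hd : 3 ≤ d) :
    ((2 : ZMod (2 ^ (d - 1))) ^ (d - 2) + 1) * ((2 : ZMod (2 ^ (d - 1))) ^ (d - 2) + 1) = 1 := by
  have h0 : (2 : ZMod (2 ^ (d - 1))) ^ (d - 1) = 0 := zmod_two_pow_self (d - 1)
  have e1 : ((2 : ZMod (2 ^ (d - 1))) ^ (d - 2) + 1) * ((2 : ZMod (2 ^ (d - 1))) ^ (d - 2) + 1)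
      = (2 : ZMod (2 ^ (d - 1))) ^ (d - 2) * (2 : ZMod (2 ^ (d - 1))) ^ (d - 2)
        + (2 : ZMod (2 ^ (d - 1))) * (2 : ZMod (2 ^ (d - 1))) ^ (d - 2) + 1 := by ring
  have e2 : (2 : ZMod (2 ^ (d - 1))) ^ (d - 2) * (2 : ZMod (2 ^ (d - 1))) ^ (d - 2)
      = (2 : ZMod (2 ^ (d - 1))) ^ (d - 3) * (2 : ZMod (2 ^ (d - 1))) ^ (d - 1) := by
    rw [← pow_add, ← pow_add]; congr 1; omega
  have e3 : (2 : ZMod (2 ^ (d - 1))) * (2 : ZMod (2 ^ (d - 1))) ^ (d - 2)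
      = (2 : ZMod (2 ^ (d - 1))) ^ (d - 1) := by
    rw [← pow_succ']; congr 1; omega
  rw [e1, e2, e3, h0, mul_zero, add_zero, zero_add]

/-- The unit `2^(d-2) + 1` of `ZMod (2^(d-1))`. -/
def geUnit (d : ℕ) (hd : 3 ≤ d) : (ZMod (2 ^ (d - 1)))ˣ :=
  ⟨(2 : ZMod (2 ^ (d - 1))) ^ (d - 2) + 1, (2 : ZMod (2 ^ (d - 1))) ^ (d - 2) + 1,
    ge_val_sq d hd, ge_val_sq d hd⟩

lemma geUnit_sq (d : ℕ) (hd : 3 ≤ d) : (geUnit d hd) ^ 2 = 1 := by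
  ext
  rw [Units.val_pow_eq_pow_val, Units.val_one, pow_two]
  exact ge_val_sq d hd

/-- Group (e): the semidirect product
`C_{2^(d-1)} ⋊ (C₂ × C₂) = ⟨s, t, e ∣ s^(2^(d-1)) = t² = e² = 1, te = et,
t s t⁻¹ = s⁻¹, e s e⁻¹ = s^(2^(d-2)+1)⟩`,
the first `C₂` factor (generated by `t`) acting as inversion and the second (generated
by `e`) acting as multiplication by `2^(d-2) + 1`. -/
abbrev GroupE (d : ℕ) (hd : 3 ≤ d) : Type :=
  Multiplicative (ZMod (2 ^ (d - 1))) ⋊[(zmodUnitsToMulAut (2 ^ (d - 1))).comp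
    (MonoidHom.coprod (c2hom (-1 : (ZMod (2 ^ (d - 1)))ˣ) neg_one_sq)
      (c2hom (geUnit d hd) (geUnit_sq d hd)))]
    (Multiplicative (ZMod 2) × Multiplicative (ZMod 2))

/-!
The five groups are told apart by the number of solutions of `x * x = 1`: it is
`2^d + 4`, `2^(d-1) + 4`, `2^d + 2`, `2^(d-1) + 2` and `2^(d-1) + 2^(d-2) + 4` respectively,
and these numbers are pairwise distinct once `2^(d-2) > 2`. In the dihedral group of order `2n`
the solutions are the `n` reflections and the rotations of order dividing `2`; in the central
product they are counted through their preimages in `D_{2^d} × C₄`, which square to `1` or to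
`(s₁, c²)`. In a semidirect product `ZMod (2^m) ⋊ G` with `G` of exponent `2` acting through
units `u g`, the element `(a, g)` squares to `1` iff `(1 + u g) * a = 0`, an equation with
`gcd (2^m) (1 + u g)` solutions. Each index-2 dihedral subgroup is generated by a rotation of
order `2^(d-1)` and an involution inverting it.
-/

section SquareRootsOfOne

variable {G H : Type*}

lemma MulEquiv.card_mul_self_eq_one [Monoid G] [Monoid H] (e : G ≃* H) :
    Nat.card {x : G // x * x = 1} = Nat.card {y : H // y * y = 1} :=
  Nat.card_congr <| e.toEquiv.subtypeEquiv fun x => by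
    rw [MulEquiv.toEquiv_eq_coe, MulEquiv.coe_toEquiv, ← map_mul, map_eq_one_iff e e.injective]

lemma isEmpty_mulEquiv_of_card_mul_self_eq_one_ne [Monoid G] [Monoid H]
    (h : Nat.card {x : G // x * x = 1} ≠ Nat.card {y : H // y * y = 1}) : IsEmpty (G ≃* H) :=
  ⟨fun e => h e.card_mul_self_eq_one⟩

lemma Prod.card_mul_self_eq [Monoid G] [Monoid H] (c : G × H) :
    Nat.card {x : G × H // x * x = c} =
      Nat.card {a : G // a * a = c.1} * Nat.card {b : H // b * b = c.2} := by
  rw [← Nat.card_prod]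
  exact Nat.card_congr <|
    (Equiv.subtypeEquivRight fun _ => Prod.ext_iff).trans
      (Equiv.subtypeProdEquivProd (p := fun a : G => a * a = c.1) (q := fun b : H => b * b = c.2))

lemma mem_zpowers_iff_of_mul_self_eq_one [Group G] {z g : G} (hz : z * z = 1) :
    g ∈ Subgroup.zpowers z ↔ g = 1 ∨ g = z := by
  refine ⟨?_, ?_⟩
  · rintro ⟨k, rfl⟩
    dsimp only
    have hz2 : z ^ (2 : ℤ) = 1 := by rw [zpow_two, hz]
    rcases Int.even_or_odd' k with ⟨m, rfl | rfl⟩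
    · left; rw [zpow_mul, hz2, one_zpow]
    · right; rw [zpow_add_one, zpow_mul, hz2, one_zpow, one_mul]
  · rintro (rfl | rfl)
    · exact one_mem _
    · exact Subgroup.mem_zpowers _

lemma card_zpowers_of_mul_self_eq_one [Group G] {z : G} (hz : z * z = 1) (hz1 : z ≠ 1) :
    Nat.card (Subgroup.zpowers z) = 2 := by
  rw [Nat.card_zpowers, orderOf_eq_prime (by rw [pow_two, hz]) hz1]

lemma two_mul_card_mul_self_eq_one_quotient [Group G] [Finite G] {z : G} (hz : z * z = 1)
    (hz1 : z ≠ 1) [(Subgroup.zpowers z).Normal] :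
    2 * Nat.card {y : G ⧸ Subgroup.zpowers z // y * y = 1} =
      Nat.card {g : G // g * g = 1} + Nat.card {g : G // g * g = z} := by
  classical
  have hdisj : Disjoint (fun g : G => g * g = 1) (fun g => g * g = z) := by
    rw [disjoint_iff_inf_le]
    rintro g ⟨h1, hzg⟩
    exact hz1 (hzg.symm.trans h1)
  have hpre := QuotientGroup.card_preimage_mk (Subgroup.zpowers z) {y | y * y = 1}
  rw [card_zpowers_of_mul_self_eq_one hz hz1] at hpre
  refine hpre.symm.trans ?_
  rw [← Nat.card_sum, ← Nat.card_congr (subtypeOrEquiv _ _ hdisj)]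
  refine Nat.card_congr (Equiv.subtypeEquivRight fun g => ?_)
  rw [Set.mem_preimage, Set.mem_ofPred_eq, ← QuotientGroup.mk_mul, QuotientGroup.eq_one_iff,
    mem_zpowers_iff_of_mul_self_eq_one hz]

lemma exists_index_two_mulEquiv_of_injective [Group G] [Group H] [Finite H] {f : H →* G}
    (hf : Function.Injective f) (hcard : Nat.card G = 2 * Nat.card H) :
    ∃ K : Subgroup G, K.index = 2 ∧ Nonempty (K ≃* H) := by
  refine ⟨f.range, ?_, ⟨(MonoidHom.ofInjective hf).symm⟩⟩
  have h := f.range.card_mul_index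
  rw [hcard, ← Nat.card_congr (MonoidHom.ofInjective hf).toEquiv, mul_comm] at h
  exact Nat.eq_of_mul_eq_mul_right Nat.card_pos h

end SquareRootsOfOne

lemma Nat.two_pow_gcd_two_pow_mul_odd {m k u : ℕ} (hk : k ≤ m) (hu : Odd u) :
    (2 ^ m).gcd (2 ^ k * u) = 2 ^ k := by
  have h2u : Nat.Coprime 2 u := Nat.coprime_two_left.2 hu
  rw [Nat.Coprime.gcd_mul _ (h2u.pow_left k), Nat.gcd_eq_right (Nat.pow_dvd_pow 2 hk),
    Nat.Coprime.gcd_eq_one (h2u.pow_left m), mul_one]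

lemma card_add_self_eq_add_self {A : Type*} [AddCommGroup A] (b : A) :
    Nat.card {i : A // i + i = b + b} = Nat.card {i : A // i + i = 0} :=
  Nat.card_congr <| ((Equiv.addRight b).subtypeEquiv fun i => by
    rw [Equiv.coe_addRight, add_add_add_comm, add_eq_right]).symm

namespace ZMod

lemma card_intCast_mul_eq_zero (n : ℕ) [NeZero n] (c : ℤ) :
    Nat.card {a : ZMod n // (c : ZMod n) * a = 0} = n.gcd c.natAbs := by
  have key (m : ℕ) : Nat.card {a : ZMod n // (m : ZMod n) * a = 0} = n.gcd m := by
    have h := IsAddCyclic.card_nsmulAddMonoidHom_ker (ZMod n) m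
    rw [Nat.card_zmod] at h
    rw [← h]
    exact Nat.card_congr <| Equiv.subtypeEquivRight fun a => by
      rw [AddMonoidHom.mem_ker, nsmulAddMonoidHom_apply, nsmul_eq_mul]
  obtain ⟨m, rfl | rfl⟩ := Int.eq_nat_or_neg c
  · simpa using key m
  · simpa using key m

lemma card_mul_eq_zero_of_eq_two_pow_mul_odd {m k : ℕ} {u : ℤ} (hk : k ≤ m) (hu : Odd u)
    {c : ZMod (2 ^ m)} (hc : c = 2 ^ k * u) :
    Nat.card {a : ZMod (2 ^ m) // c * a = 0} = 2 ^ k := by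
  have hc' : c = ((2 ^ k * u : ℤ) : ZMod (2 ^ m)) := by push_cast; exact hc
  rw [hc', card_intCast_mul_eq_zero, Int.natAbs_mul, Int.natAbs_pow]
  exact Nat.two_pow_gcd_two_pow_mul_odd hk (Int.natAbs_odd.2 hu)

lemma card_add_self_eq_zero_two_pow {m : ℕ} (hm : 1 ≤ m) :
    Nat.card {i : ZMod (2 ^ m) // i + i = 0} = 2 := by
  simp_rw [← two_mul]
  exact card_mul_eq_zero_of_eq_two_pow_mul_odd (k := 1) (u := 1) hm odd_one (by simp)

variable {n m : ℕ} (k : ℕ) (h : m = k * n)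

def scaleHom : ZMod n →+ ZMod m :=
  ZMod.lift n ⟨zmultiplesHom (ZMod m) (k : ZMod m), by
    rw [zmultiplesHom_apply, natCast_zsmul, nsmul_eq_mul, ← Nat.cast_mul, mul_comm, ← h,
      natCast_self]⟩

lemma scaleHom_intCast (j : ℤ) : scaleHom k h j = ((j * k : ℤ) : ZMod m) := by
  rw [scaleHom, lift_coe, zmultiplesHom_apply, zsmul_eq_mul, Int.cast_mul, Int.cast_natCast]

lemma scaleHom_injective (hk : k ≠ 0) : Function.Injective (scaleHom k h) := by
  refine (injective_iff_map_eq_zero _).2 fun x hx => ?_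
  obtain ⟨j, rfl⟩ := intCast_surjective x
  rw [scaleHom_intCast, intCast_zmod_eq_zero_iff_dvd, h, Nat.cast_mul, mul_comm j] at hx
  exact (intCast_zmod_eq_zero_iff_dvd j n).2 (Int.dvd_of_mul_dvd_mul_left (by exact_mod_cast hk) hx)

lemma natCast_mul_scaleHom (x : ZMod n) : (n : ZMod m) * scaleHom k h x = 0 := by
  have hnk : (n : ZMod m) * k = 0 := by rw [← Nat.cast_mul, mul_comm, ← h, natCast_self]
  obtain ⟨j, rfl⟩ := intCast_surjective x
  rw [scaleHom_intCast, Int.cast_mul, Int.cast_natCast, mul_left_comm, hnk, mul_zero]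

end ZMod

namespace DihedralGroup

variable {n m : ℕ}

def mulSelfEqREquiv (c : ZMod n) :
    {x : DihedralGroup n // x * x = r c} ≃ {i : ZMod n // i + i = c} ⊕ {_i : ZMod n // 0 = c} :=
  equivSum.subtypeEquivOfSubtype'.trans <| Equiv.subtypeSum.trans <|
    Equiv.sumCongr
      (Equiv.subtypeEquivRight fun i => show r i * r i = r c ↔ _ by rw [r_mul_r, r.injEq])
      (Equiv.subtypeEquivRight fun i => show sr i * sr i = r c ↔ _ by
        rw [sr_mul_self, one_def, r.injEq])

lemma card_mul_self_eq_one [NeZero n] :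
    Nat.card {x : DihedralGroup n // x * x = 1} = Nat.card {i : ZMod n // i + i = 0} + n := by
  rw [one_def, Nat.card_congr (mulSelfEqREquiv 0), Nat.card_sum,
    Nat.card_congr (Equiv.subtypeUnivEquiv fun _ => rfl), Nat.card_zmod]

lemma card_mul_self_eq_r {c : ZMod n} (hc : c ≠ 0) :
    Nat.card {x : DihedralGroup n // x * x = r c} = Nat.card {i : ZMod n // i + i = c} :=
  have : IsEmpty {_i : ZMod n // 0 = c} := ⟨fun i => hc i.2.symm⟩
  Nat.card_congr ((mulSelfEqREquiv c).trans (Equiv.sumEmpty _ _))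

def rHom : Multiplicative (ZMod n) →* DihedralGroup n where
  toFun i := r (Multiplicative.toAdd i)
  map_one' := rfl
  map_mul' _ _ := (r_mul_r _ _).symm

section Lift

variable {G : Type*} [Group G] (ρ : Multiplicative (ZMod n) →* G) (b : G)

open Multiplicative in
def lift (hb : b * b = 1) (hρ : ∀ x, b * ρ x * b⁻¹ = ρ x⁻¹) : DihedralGroup n →* G :=
  MonoidHom.mk' (fun | r i => ρ (ofAdd i) | sr i => b * ρ (ofAdd i)) <| by
    have hρb (x) : ρ x * b = b * ρ x⁻¹ := by
      have h := hρ x⁻¹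
      rw [inv_inv] at h
      rw [← h, inv_mul_cancel_right]
    rintro (i | i) (j | j)
    · show ρ (ofAdd (i + j)) = ρ (ofAdd i) * ρ (ofAdd j)
      rw [ofAdd_add, map_mul]
    · show b * ρ (ofAdd (j - i)) = ρ (ofAdd i) * (b * ρ (ofAdd j))
      rw [← mul_assoc, hρb, mul_assoc, ← map_mul, sub_eq_neg_add, ofAdd_add, ofAdd_neg]
    · show b * ρ (ofAdd (i + j)) = b * ρ (ofAdd i) * ρ (ofAdd j)
      rw [mul_assoc, ← map_mul, ofAdd_add]
    · show ρ (ofAdd (j - i)) = b * ρ (ofAdd i) * (b * ρ (ofAdd j))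
      rw [mul_assoc b, ← mul_assoc (ρ _), hρb, ← mul_assoc, ← mul_assoc, hb, one_mul, ← map_mul,
        sub_eq_neg_add, ofAdd_add, ofAdd_neg]

variable {ρ b}

lemma lift_injective (hb : b * b = 1) (hρ : ∀ x, b * ρ x * b⁻¹ = ρ x⁻¹)
    (hρ_inj : Function.Injective ρ) (hb_mem : b ∉ ρ.range) :
    Function.Injective (lift ρ b hb hρ) := by
  refine (injective_iff_map_eq_one _).2 ?_
  rintro (i | i) h
  · rw [one_def, ofAdd_eq_one.1 ((map_eq_one_iff ρ hρ_inj).1 h)]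
  · refine absurd ⟨(Multiplicative.ofAdd i)⁻¹, ?_⟩ hb_mem
    rw [map_inv, eq_comm]
    exact eq_inv_of_mul_eq_one_left h

end Lift

def map (χ : ZMod n →+ ZMod m) : DihedralGroup n →* DihedralGroup m :=
  lift (rHom.comp χ.toMultiplicative) (sr 0) (sr_mul_self 0) fun x =>
    show sr 0 * r (χ x.toAdd) * (sr 0)⁻¹ = r (χ x⁻¹.toAdd) by
      rw [inv_sr, sr_mul_r, sr_mul_sr, toAdd_inv, map_neg, zero_add, zero_sub]

lemma map_injective {χ : ZMod n →+ ZMod m} (hχ : Function.Injective χ) :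
    Function.Injective (map χ) :=
  lift_injective _ _ (fun _ _ h => hχ (r.inj h)) fun ⟨_, h⟩ => by cases h

end DihedralGroup

lemma Multiplicative.sum_zmod_two {M : Type*} [AddCommMonoid M]
    (f : Multiplicative (ZMod 2) → M) : ∑ g, f g = f 1 + f (ofAdd 1) :=
  Fin.sum_univ_two (f ∘ ofAdd)

lemma c2hom_ofAdd_one {G : Type*} [Group G] (z : G) (hz : z ^ 2 = 1) :
    c2hom z hz (Multiplicative.ofAdd 1) = z :=
  pow_one z

namespace SemidirectProduct

variable {N G : Type*} [Group N] [Group G]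

def mulSelfEqOneEquiv (φ : G →* MulAut N) :
    {x : N ⋊[φ] G // x * x = 1} ≃ Σ g : {g : G // g * g = 1}, {n : N // n * φ g n = 1} where
  toFun x := ⟨⟨x.1.right, congrArg right x.2⟩, x.1.left, congrArg left x.2⟩
  invFun y := ⟨⟨y.2, y.1⟩, SemidirectProduct.ext y.2.2 y.1.2⟩
  left_inv _ := rfl
  right_inv _ := rfl

variable {q : ℕ} (ψ : G →* (ZMod q)ˣ)

lemma card_mul_self_eq_one_zmodUnitsToMulAut [NeZero q] [Fintype G] (hG : ∀ g : G, g * g = 1) :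
    Nat.card {x : Multiplicative (ZMod q) ⋊[(zmodUnitsToMulAut q).comp ψ] G // x * x = 1} =
      ∑ g, Nat.card {a : ZMod q // (1 + ψ g : ZMod q) * a = 0} := by
  classical
  rw [Nat.card_congr (mulSelfEqOneEquiv _), Nat.card_sigma]
  refine Fintype.sum_equiv (Equiv.subtypeUnivEquiv hG) _ _ fun g => ?_
  refine Nat.card_congr (Multiplicative.toAdd.subtypeEquiv fun n => ?_)
  show n * Multiplicative.ofAdd ((ψ g : ZMod q) * Multiplicative.toAdd n) = 1 ↔ _
  rw [← toAdd_eq_zero, toAdd_mul, toAdd_ofAdd, add_mul, one_mul]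
  rfl

lemma inr_mul_inl_mul_inr_inv (g : G) (a : ZMod q) :
    (inr g * inl (.ofAdd a) * (inr g)⁻¹ :
      Multiplicative (ZMod q) ⋊[(zmodUnitsToMulAut q).comp ψ] G) =
        inl (.ofAdd ((ψ g : ZMod q) * a)) := by
  rw [← map_inv, ← inl_aut]
  rfl

lemma exists_injective_dihedralGroup_hom {n : ℕ} {χ : ZMod n →+ ZMod q}
    (hχ : Function.Injective χ) {t : G} (ht : t * t = 1) (ht1 : t ≠ 1)
    (hneg : ∀ x, (ψ t : ZMod q) * χ x = -χ x) :
    ∃ f : DihedralGroup n →* Multiplicative (ZMod q) ⋊[(zmodUnitsToMulAut q).comp ψ] G,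
      Function.Injective f := by
  refine ⟨DihedralGroup.lift (inl.comp χ.toMultiplicative) (inr t)
    (by rw [← map_mul, ht, map_one]) fun x => ?_, DihedralGroup.lift_injective _ _
    (inl_injective.comp hχ) fun ⟨x, hx⟩ => ht1 ?_⟩
  · simp [inr_mul_inl_mul_inr_inv, hneg]
  · simpa using (congrArg right hx).symm

end SemidirectProduct

lemma card_mul_self_eq_one_zmod_two :
    Nat.card {b : Multiplicative (ZMod 2) // b * b = 1} = 2 := by
  rw [Nat.card_eq_fintype_card]; decide

lemma card_mul_self_eq_one_zmod_four :
    Nat.card {c : Multiplicative (ZMod 4) // c * c = 1} = 2 := by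
  rw [Nat.card_eq_fintype_card]; decide

lemma card_mul_self_eq_ofAdd_two_zmod_four :
    Nat.card {c : Multiplicative (ZMod 4) // c * c = .ofAdd 2} = 2 := by
  rw [Nat.card_eq_fintype_card]; decide

section FiveGroups

open DihedralGroup

variable (d : ℕ)

lemma card_mul_self_eq_one_groupA (hd : 2 ≤ d) :
    Nat.card {x : GroupA d // x * x = 1} = 2 ^ d + 4 := by
  rw [Prod.card_mul_self_eq, Prod.fst_one, Prod.snd_one, DihedralGroup.card_mul_self_eq_one,
    ZMod.card_add_self_eq_zero_two_pow (by omega), card_mul_self_eq_one_zmod_two,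
    ← mul_pow_sub_one (by omega : d ≠ 0)]
  ring

lemma exists_index_two_groupA :
    ∃ H : Subgroup (GroupA d), H.index = 2 ∧ Nonempty (H ≃* DihedralGroup (2 ^ (d - 1))) :=
  exists_index_two_mulEquiv_of_injective (f := MonoidHom.inl _ _)
    (fun _ _ h => congrArg Prod.fst h) (by simp [mul_comm])

lemma cpGen_mul_self : cpGen d * cpGen d = 1 :=
  Prod.ext (by rw [Prod.fst_mul, cpGen, r_mul_r, half_add_half, Prod.fst_one, one_def])
    (show Multiplicative.ofAdd (2 : ZMod 4) * .ofAdd 2 = 1 by decide)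

lemma cpGen_ne_one : cpGen d ≠ 1 :=
  fun h => absurd (congrArg Prod.snd h) (show Multiplicative.ofAdd (2 : ZMod 4) ≠ 1 by decide)

lemma card_mul_self_eq_one_groupB (hd : 3 ≤ d) :
    Nat.card {x : GroupB d // x * x = 1} = 2 ^ (d - 1) + 4 := by
  have hquot := two_mul_card_mul_self_eq_one_quotient (cpGen_mul_self d) (cpGen_ne_one d)
  have hhalf : ((2 ^ (d - 2) : ℕ) : ZMod (2 ^ (d - 1))) =
      ((2 ^ (d - 3) : ℕ) : ZMod (2 ^ (d - 1))) + ((2 ^ (d - 3) : ℕ) : ZMod (2 ^ (d - 1))) := by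
    rw [← Nat.cast_add, ← two_mul, ← pow_succ', show d - 3 + 1 = d - 2 by omega]
  have hne : ((2 ^ (d - 2) : ℕ) : ZMod (2 ^ (d - 1))) ≠ 0 := by
    rw [Ne, ZMod.natCast_eq_zero_iff, Nat.pow_dvd_pow_iff_le_right (by norm_num)]
    omega
  have hroots : Nat.card {a : DihedralGroup (2 ^ (d - 1)) // a * a = (cpGen d).1} = 2 := by
    rw [show (cpGen d).1 = r _ from rfl, DihedralGroup.card_mul_self_eq_r hne, hhalf,
      card_add_self_eq_add_self, ZMod.card_add_self_eq_zero_two_pow (by omega)]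
  rw [Prod.card_mul_self_eq, Prod.card_mul_self_eq, Prod.fst_one, Prod.snd_one,
    DihedralGroup.card_mul_self_eq_one, ZMod.card_add_self_eq_zero_two_pow (by omega),
    card_mul_self_eq_one_zmod_four, hroots, show (cpGen d).2 = .ofAdd 2 from rfl,
    card_mul_self_eq_ofAdd_two_zmod_four] at hquot
  change 2 * Nat.card {x : GroupB d // x * x = 1} = _ at hquot
  omega

lemma exists_index_two_groupB :
    ∃ H : Subgroup (GroupB d), H.index = 2 ∧ Nonempty (H ≃* DihedralGroup (2 ^ (d - 1))) := by
  refine exists_index_two_mulEquiv_of_injective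
    (f := (QuotientGroup.mk' _).comp (MonoidHom.inl _ (Multiplicative (ZMod 4))))
    ((injective_iff_map_eq_one _).2 fun a ha => ?_) ?_
  · rw [MonoidHom.comp_apply, QuotientGroup.mk'_apply, QuotientGroup.eq_one_iff,
      mem_zpowers_iff_of_mul_self_eq_one (cpGen_mul_self d)] at ha
    rcases ha with ha | ha
    · exact congrArg Prod.fst ha
    · exact absurd (congrArg Prod.snd ha)
        (show (1 : Multiplicative (ZMod 4)) ≠ .ofAdd 2 by decide)
  · have h := Subgroup.card_eq_card_quotient_mul_card_subgroup (Subgroup.zpowers (cpGen d))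
    rw [card_zpowers_of_mul_self_eq_one (cpGen_mul_self d) (cpGen_ne_one d), Nat.card_prod,
      show Nat.card (Multiplicative (ZMod 4)) = 4 by simp] at h
    change _ = Nat.card (GroupB d) * 2 at h
    omega

lemma card_mul_self_eq_one_dihedralGroup_two_pow (hd : 1 ≤ d) :
    Nat.card {x : DihedralGroup (2 ^ d) // x * x = 1} = 2 ^ d + 2 := by
  rw [DihedralGroup.card_mul_self_eq_one, ZMod.card_add_self_eq_zero_two_pow hd, add_comm]

lemma exists_index_two_dihedralGroup_two_pow (hd : 1 ≤ d) :
    ∃ H : Subgroup (DihedralGroup (2 ^ d)), H.index = 2 ∧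
      Nonempty (H ≃* DihedralGroup (2 ^ (d - 1))) :=
  exists_index_two_mulEquiv_of_injective
    (DihedralGroup.map_injective (ZMod.scaleHom_injective 2 (mul_pow_sub_one (by omega) 2).symm
      two_ne_zero))
    (by rw [DihedralGroup.nat_card, DihedralGroup.nat_card, mul_pow_sub_one (by omega)])

lemma sdUnit_val (hd : 2 ≤ d) :
    ((sdUnit d hd : (ZMod (2 ^ d))ˣ) : ZMod (2 ^ d)) = 2 ^ (d - 1) - 1 :=
  rfl

lemma geUnit_val (hd : 3 ≤ d) :
    ((geUnit d hd : (ZMod (2 ^ (d - 1)))ˣ) : ZMod (2 ^ (d - 1))) = 2 ^ (d - 2) + 1 :=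
  rfl

lemma card_mul_self_eq_one_semidihedralGroup (hd : 2 ≤ d) :
    Nat.card {x : SemidihedralGroup d hd // x * x = 1} = 2 ^ (d - 1) + 2 := by
  rw [SemidirectProduct.card_mul_self_eq_one_zmodUnitsToMulAut _ (by decide),
    Multiplicative.sum_zmod_two, map_one, c2hom_ofAdd_one, Units.val_one, sdUnit_val,
    ZMod.card_mul_eq_zero_of_eq_two_pow_mul_odd (k := 1) (u := 1) (by omega) odd_one (by norm_num),
    ZMod.card_mul_eq_zero_of_eq_two_pow_mul_odd (k := d - 1) (u := 1) (by omega) odd_one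
      (by push_cast; ring)]
  ring

lemma exists_index_two_semidihedralGroup (hd : 2 ≤ d) :
    ∃ H : Subgroup (SemidihedralGroup d hd), H.index = 2 ∧
      Nonempty (H ≃* DihedralGroup (2 ^ (d - 1))) := by
  have h2 : 2 ^ d = 2 * 2 ^ (d - 1) := (mul_pow_sub_one (by omega) 2).symm
  have hneg (x : ZMod (2 ^ (d - 1))) :
      ((c2hom (sdUnit d hd) (sdUnit_sq d hd) (.ofAdd 1) : (ZMod (2 ^ d))ˣ) : ZMod (2 ^ d)) *
        ZMod.scaleHom 2 h2 x = -ZMod.scaleHom 2 h2 x := by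
    have h := ZMod.natCast_mul_scaleHom 2 h2 x
    push_cast at h
    rw [c2hom_ofAdd_one, sdUnit_val, sub_mul, h, one_mul, zero_sub]
  obtain ⟨f, hf⟩ := SemidirectProduct.exists_injective_dihedralGroup_hom _
    (ZMod.scaleHom_injective 2 h2 two_ne_zero) (by decide) (by decide) hneg
  refine exists_index_two_mulEquiv_of_injective hf ?_
  rw [SemidirectProduct.card, DihedralGroup.nat_card]
  simp [h2, mul_comm]

lemma card_mul_self_eq_one_groupE (h3 : 3 ≤ d) (hd : 4 ≤ d) :
    Nat.card {x : GroupE d h3 // x * x = 1} = 2 ^ (d - 1) + 2 ^ (d - 2) + 4 := by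
  have h11 : (1 + 1 : ZMod (2 ^ (d - 1))) = 2 ^ 1 * ((1 : ℤ) : ZMod _) := by norm_num
  have h1e : (1 + 1 * (2 ^ (d - 2) + 1) : ZMod (2 ^ (d - 1))) =
      2 ^ 1 * ((2 ^ (d - 3) + 1 : ℤ) : ZMod _) := by
    rw [show d - 2 = d - 3 + 1 by omega]
    push_cast
    ring
  have ht1 : (1 + -1 : ZMod (2 ^ (d - 1))) = 2 ^ (d - 1) * ((1 : ℤ) : ZMod _) := by
    rw [zmod_two_pow_self]
    ring
  have hte : (1 + -1 * (2 ^ (d - 2) + 1) : ZMod (2 ^ (d - 1))) =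
      2 ^ (d - 2) * ((-1 : ℤ) : ZMod _) := by
    push_cast
    ring
  rw [SemidirectProduct.card_mul_self_eq_one_zmodUnitsToMulAut _ (by decide),
    Fintype.sum_prod_type]
  simp only [Multiplicative.sum_zmod_two, MonoidHom.coprod_apply, map_one, c2hom_ofAdd_one,
    mul_one, Units.val_one, Units.val_mul, Units.val_neg, geUnit_val]
  rw [ZMod.card_mul_eq_zero_of_eq_two_pow_mul_odd (by omega) odd_one h11,
    ZMod.card_mul_eq_zero_of_eq_two_pow_mul_odd (by omega)
      (Int.even_pow.2 ⟨even_two, by omega⟩).add_one h1e,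
    ZMod.card_mul_eq_zero_of_eq_two_pow_mul_odd le_rfl odd_one ht1,
    ZMod.card_mul_eq_zero_of_eq_two_pow_mul_odd (by omega) odd_one.neg hte]
  omega

lemma exists_index_two_groupE (hd : 3 ≤ d) :
    ∃ H : Subgroup (GroupE d hd), H.index = 2 ∧ Nonempty (H ≃* DihedralGroup (2 ^ (d - 1))) := by
  obtain ⟨f, hf⟩ : ∃ f : DihedralGroup (2 ^ (d - 1)) →* GroupE d hd, Function.Injective f :=
    SemidirectProduct.exists_injective_dihedralGroup_hom _ (χ := AddMonoidHom.id _)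
      Function.injective_id (t := (.ofAdd 1, 1)) (by decide) (by decide)
      fun x => by simp [c2hom_ofAdd_one]
  refine exists_index_two_mulEquiv_of_injective hf ?_
  rw [SemidirectProduct.card, DihedralGroup.nat_card]
  simp only [Nat.card_eq_fintype_card, Fintype.card_multiplicative, ZMod.card, Fintype.card_prod]
  ring

end FiveGroups

/-- Let `d ≥ 4`.  The five groups
(a) `D_{2^d} × C₂`, (b) the central product `D_{2^d} ∘ C₄`, (c) the dihedral group of
order `2^(d+1)`, (d) the semidihedral group `SD_{2^(d+1)}`, and
(e) `C_{2^(d-1)} ⋊ (C₂ × C₂)` (with `t` acting by inversion and `e` by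
`s ↦ s^(2^(d-2)+1)`) are pairwise non-isomorphic, and each of them contains a subgroup
of index `2` isomorphic to the dihedral group `D_{2^d}` of order `2^d`. -/
theorem five_extensions_pairwise_nonisomorphic (d : ℕ) (hd : 4 ≤ d) :
    (IsEmpty (GroupA d ≃* GroupB d) ∧
     IsEmpty (GroupA d ≃* DihedralGroup (2 ^ d)) ∧
     IsEmpty (GroupA d ≃* SemidihedralGroup d (by omega)) ∧
     IsEmpty (GroupA d ≃* GroupE d (by omega)) ∧
     IsEmpty (GroupB d ≃* DihedralGroup (2 ^ d)) ∧
     IsEmpty (GroupB d ≃* SemidihedralGroup d (by omega)) ∧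
     IsEmpty (GroupB d ≃* GroupE d (by omega)) ∧
     IsEmpty (DihedralGroup (2 ^ d) ≃* SemidihedralGroup d (by omega)) ∧
     IsEmpty (DihedralGroup (2 ^ d) ≃* GroupE d (by omega)) ∧
     IsEmpty (SemidihedralGroup d (by omega) ≃* GroupE d (by omega))) ∧
    ((∃ H : Subgroup (GroupA d), H.index = 2 ∧
        Nonempty (H ≃* DihedralGroup (2 ^ (d - 1)))) ∧
     (∃ H : Subgroup (GroupB d), H.index = 2 ∧
        Nonempty (H ≃* DihedralGroup (2 ^ (d - 1)))) ∧
     (∃ H : Subgroup (DihedralGroup (2 ^ d)), H.index = 2 ∧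
        Nonempty (H ≃* DihedralGroup (2 ^ (d - 1)))) ∧
     (∃ H : Subgroup (SemidihedralGroup d (by omega)), H.index = 2 ∧
        Nonempty (H ≃* DihedralGroup (2 ^ (d - 1)))) ∧
     (∃ H : Subgroup (GroupE d (by omega)), H.index = 2 ∧
        Nonempty (H ≃* DihedralGroup (2 ^ (d - 1))))) := by
  have h1 : 2 ^ d = 2 * 2 ^ (d - 1) := (mul_pow_sub_one (by omega) 2).symm
  have h2 : 2 ^ (d - 1) = 2 * 2 ^ (d - 2) := by rw [← pow_succ', show d - 2 + 1 = d - 1 by omega]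
  have h4 : 2 ^ 2 ≤ 2 ^ (d - 2) := Nat.pow_le_pow_right two_pos (by omega)
  have hA := card_mul_self_eq_one_groupA d (by omega)
  have hB := card_mul_self_eq_one_groupB d (by omega)
  have hC := card_mul_self_eq_one_dihedralGroup_two_pow d (by omega)
  have hD := card_mul_self_eq_one_semidihedralGroup d (by omega)
  have hE := card_mul_self_eq_one_groupE d (by omega) hd
  refine ⟨⟨?_, ?_, ?_, ?_, ?_, ?_, ?_, ?_, ?_, ?_⟩, exists_index_two_groupA d,
    exists_index_two_groupB d, exists_index_two_dihedralGroup_two_pow d (by omega),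
    exists_index_two_semidihedralGroup d _, exists_index_two_groupE d _⟩ <;>
  exact isEmpty_mulEquiv_of_card_mul_self_eq_one_ne (by simp only [hA, hB, hC, hD, hE]; omega)
end

section
/- Let d ≥ 3 and let E be a finite group having a subgroup D of index 2 with D isomorphic to the dihedral group of order 2^d. Let D' = [D, D] be the commutator subgroup of D; then D' is normal in E, and in the quotient group E/D' the image of D has a complement. In other words, the extension 1 → D/D' → E/D' → C₂ → 1 always splits. -/
/-!
An automorphism `φ` of the dihedral group `D_{2n}`, `n ≠ 2`, preserves the rotations, so it
is `r a ↦ r (i a)`, `sr a ↦ sr (j + i a)` with `i` a unit. Take `x ∈ E \ D`: conjugation by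
`x` gives such a `φ`, and `φ²` is conjugation by `g = x² ∈ D`. Comparing both sides modulo
`4 ∣ n`, `g` cannot be a reflection (since `i² ≠ -1 mod 4`), and either `x²` or `(s x)²` is
an even rotation, i.e. lies in `D' = ⟨r²⟩`. An element of `E \ D` whose square lies in `D'`
maps to an involution of `E/D'` outside the index-two subgroup `D/D'`, which spans a complement.
-/

theorem ZMod.even_of_even_castHom {m n : ℕ} (h : m ∣ n) (hm : Even m) {z : ZMod n}
    (hz : Even (ZMod.castHom h (ZMod m) z)) : Even z := by
  obtain ⟨t, ht⟩ := hz.map (ZMod.castHom hm.two_dvd (ZMod 2))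
  rw [CharTwo.add_self_eq_zero, ← RingHom.comp_apply, ZMod.castHom_comp,
    ← ZMod.intCast_zmod_cast z, map_intCast, ZMod.intCast_eq_zero_iff_even] at ht
  rw [← ZMod.intCast_zmod_cast z]
  exact ht.intCast

namespace DihedralGroup

variable {n : ℕ}

open scoped commutatorElement in
theorem r_mem_commutator_of_even {a : ZMod n} (ha : Even a) :
    r a ∈ commutator (DihedralGroup n) := by
  obtain ⟨b, rfl⟩ := ha
  have hcomm : ⁅r b, sr 0⁆ = r (b + b) := by
    simp only [commutatorElement_def, inv_r, inv_sr, r_mul_sr, sr_mul_r, sr_mul_sr]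
    ring_nf
  rw [← hcomm, commutator_def]
  exact Subgroup.commutator_mem_commutator (Subgroup.mem_top _) (Subgroup.mem_top _)

theorem exists_apply_r_eq_and_apply_sr_eq (hn : n ≠ 2)
    (φ : DihedralGroup n ≃* DihedralGroup n) :
    ∃ i j : ZMod n, IsUnit i ∧ (∀ a, φ (r a) = r (i * a)) ∧
      ∀ a, φ (sr a) = sr (j + i * a) := by
  obtain ⟨i, hi⟩ : ∃ i, φ (r 1) = r i := by
    match h : φ (r 1) with
    | r i => exact ⟨i, rfl⟩
    | sr _ =>
      have := φ.orderOf_eq (r 1)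
      rw [h, orderOf_sr, orderOf_r_one] at this
      exact absurd this.symm hn
  have hr : ∀ a, φ (r a) = r (i * a) := fun a => by
    rw [← ZMod.intCast_zmod_cast a, ← r_one_zpow, map_zpow, hi, r_zpow]
  have sr_eq : ∀ a : ZMod n, sr a = sr 0 * r a := fun a => by rw [sr_mul_r, zero_add]
  obtain ⟨j, hj⟩ : ∃ j, φ (sr 0) = sr j := by
    match h : φ (sr 0) with
    | sr j => exact ⟨j, rfl⟩
    | r _ =>
      exfalso
      obtain ⟨b, hb⟩ := φ.surjective (sr 0)
      cases b with
      | r k => rw [hr] at hb; cases hb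
      | sr k => rw [sr_eq, map_mul, h, hr, r_mul_r] at hb; cases hb
  have hsr : ∀ a, φ (sr a) = sr (j + i * a) := fun a => by
    rw [sr_eq, map_mul, hj, hr, sr_mul_r]
  refine ⟨i, j, ?_, hr, hsr⟩
  obtain ⟨b, hb⟩ := φ.surjective (r 1)
  cases b with
  | r k => rw [hr] at hb; exact IsUnit.of_mul_eq_one _ (r.inj hb)
  | sr k => rw [hsr] at hb; cases hb

theorem exists_mul_apply_mul_mem_commutator (h4 : 4 ∣ n)
    (φ : DihedralGroup n ≃* DihedralGroup n) (g : DihedralGroup n)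
    (hφ : ∀ a, φ (φ a) = g * a * g⁻¹) :
    ∃ h, h * φ h * g ∈ commutator (DihedralGroup n) := by
  obtain ⟨i, j, hi, hr, hsr⟩ :=
    exists_apply_r_eq_and_apply_sr_eq (by rintro rfl; norm_num at h4) φ
  obtain ⟨k, hk⟩ := isUnit_iff_exists_inv.mp hi
  set ψ := ZMod.castHom h4 (ZMod 4)
  have hψ : ∀ z : ZMod n, Even (ψ z) → Even z :=
    fun _ => ZMod.even_of_even_castHom h4 (by decide)
  cases g with
  | r m =>
    have hjm : j + i * j = -(m + m) := by
      have := hφ (sr 0)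
      simp only [hsr, mul_zero, add_zero, inv_r, r_mul_sr, sr_mul_r, sr.injEq] at this
      rw [this]; ring
    have mod_four : ∀ i k j m : ZMod 4, i * k = 1 → j + i * j = -(m + m) →
        (∃ t, m = t + t) ∨ ∃ t, j + m = t + t := by decide
    rcases mod_four (ψ i) (ψ k) (ψ j) (ψ m) (by rw [← map_mul, hk, map_one])
        (by simp only [← map_mul, ← map_add, ← map_neg, hjm]) with hm | hjm_even
    · exact ⟨1, by simpa using r_mem_commutator_of_even (hψ m hm)⟩
    · refine ⟨sr 0, ?_⟩
      rw [hsr, mul_zero, add_zero, sr_mul_sr, r_mul_r, sub_zero]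
      exact r_mem_commutator_of_even (hψ _ (by rwa [map_add]))
  | sr m =>
    exfalso
    have hii : i * i = -1 := by
      have := hφ (r 1)
      simp only [hr, mul_one, inv_sr, sr_mul_r, sr_mul_sr, r.injEq] at this
      rw [this]; ring
    have mod_four : ∀ a : ZMod 4, a * a ≠ -1 := by decide
    exact mod_four (ψ i) (by rw [← map_mul, hii, map_neg, map_one])

end DihedralGroup

section

variable {G : Type*} [Group G]

theorem Subgroup.isComplement'_zpowers_of_index_eq_two {H : Subgroup G} (hH : H.index = 2)
    {c : G} (hc : c ∉ H) (hc2 : c ^ 2 = 1) : H.IsComplement' (zpowers c) := by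
  refine isComplement'_of_disjoint_and_mul_eq_univ ?_ ?_
  · rw [disjoint_def]
    rintro w hwH hwc
    obtain ⟨k, rfl⟩ := mem_zpowers_iff.mp hwc
    obtain ⟨t, rfl | rfl⟩ := k.even_or_odd'
    · rw [zpow_mul, zpow_two, ← pow_two, hc2, one_zpow]
    · rw [zpow_add_one, zpow_mul, zpow_two, ← pow_two, hc2, one_zpow, one_mul] at hwH
      exact absurd hwH hc
  · refine Set.eq_univ_of_forall fun g => ?_
    by_cases hg : g ∈ H
    · exact ⟨g, hg, 1, one_mem _, mul_one g⟩
    · exact ⟨g * c, (mul_mem_iff_of_index_two hH).2 (iff_of_false hg hc), c⁻¹,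
        inv_mem (mem_zpowers c), mul_inv_cancel_right g c⟩

theorem exists_isComplement'_map_mk'_of_sq_mem {N H : Subgroup G} [N.Normal] (hNH : N ≤ H)
    (hH : H.index = 2) {x : G} (hx : x ∉ H) (hx2 : x ^ 2 ∈ N) :
    ∃ C, (H.map (QuotientGroup.mk' N)).IsComplement' C := by
  have hker : (QuotientGroup.mk' N).ker ≤ H := by rwa [QuotientGroup.ker_mk']
  refine ⟨_, Subgroup.isComplement'_zpowers_of_index_eq_two
    ((Subgroup.index_map_eq H (QuotientGroup.mk'_surjective N) hker).trans hH)
    (c := QuotientGroup.mk' N x) ?_ ?_⟩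
  · rwa [← Subgroup.mem_comap, Subgroup.comap_map_eq_self hker]
  · rwa [← map_pow, QuotientGroup.mk'_apply, QuotientGroup.eq_one_iff]

theorem exists_sq_mem_commutator_of_index_eq_two {H : Subgroup G} (hH : H.index = 2) {n : ℕ}
    (h4 : 4 ∣ n) (e : H ≃* DihedralGroup n) : ∃ x ∉ H, x ^ 2 ∈ ⁅H, H⁆ := by
  have := Subgroup.normal_of_index_eq_two hH
  obtain ⟨x, hx⟩ : ∃ x, x ∉ H := by
    by_contra! h
    rw [(Subgroup.eq_top_iff' H).2 h, Subgroup.index_top] at hH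
    exact absurd hH (by norm_num)
  set φ := e.symm.trans ((MulAut.conjNormal x).trans e)
  set g := e ⟨x ^ 2, Subgroup.sq_mem_of_index_two hH x⟩
  have hφ : ∀ a, φ (φ a) = g * a * g⁻¹ := fun a => by
    apply e.symm.injective
    ext
    simp [φ, g, MulAut.conjNormal_apply, pow_two, mul_assoc]
  obtain ⟨h, hh⟩ := DihedralGroup.exists_mul_apply_mul_mem_commutator h4 φ g hφ
  refine ⟨e.symm h * x, fun hmem => hx ((H.mul_mem_cancel_left (e.symm h).2).1 hmem), ?_⟩
  have hsq : (e.symm h * x : G) ^ 2 = e.symm (h * φ h * g) := by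
    simp [φ, g, MulAut.conjNormal_apply, pow_two, mul_assoc]
  have hcomm :
      (commutator (DihedralGroup n)).map (e.symm : DihedralGroup n →* H) = commutator H := by
    rw [commutator_def, commutator_def, Subgroup.map_commutator,
      Subgroup.map_top_of_surjective _ e.symm.surjective]
  rw [hsq, ← H.map_subtype_commutator, ← hcomm]
  exact Subgroup.mem_map_of_mem _ (Subgroup.mem_map_of_mem _ hh)

end

theorem dihedral_index_two_extension_splits_mod_commutator_general (d : ℕ) (hd : 3 ≤ d)
    (E : Type*) [Group E] (D : Subgroup E) (hD : D.index = 2)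
    (hiso : Nonempty (D ≃* DihedralGroup (2 ^ (d - 1)))) :
    ∃ hN : (⁅D, D⁆ : Subgroup E).Normal,
      haveI := hN
      ∃ C : Subgroup (E ⧸ (⁅D, D⁆ : Subgroup E)),
        Subgroup.IsComplement'
          (D.map (QuotientGroup.mk' (⁅D, D⁆ : Subgroup E))) C := by
  have := Subgroup.normal_of_index_eq_two hD
  obtain ⟨e⟩ := hiso
  have h4 : 4 ∣ 2 ^ (d - 1) := Nat.pow_dvd_pow 2 (show 2 ≤ d - 1 by omega)
  obtain ⟨x, hx, hx2⟩ := exists_sq_mem_commutator_of_index_eq_two hD h4 e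
  exact ⟨Subgroup.commutator_normal D D,
    exists_isComplement'_map_mk'_of_sq_mem (Subgroup.commutator_le_self D) hD hx hx2⟩

/-- Let `d ≥ 3` and let `E` be a finite group having a subgroup `D` of index `2` with `D`
isomorphic to the dihedral group of order `2^d`.  Let `D' = ⁅D, D⁆` be the commutator
subgroup of `D`; then `D'` is normal in `E`, and in the quotient group `E/D'` the image
of `D` has a complement (i.e. the extension `1 → D/D' → E/D' → C₂ → 1` splits). -/
theorem dihedral_index_two_extension_splits_mod_commutator (d : ℕ) (hd : 3 ≤ d)
    (E : Type*) [Group E] [Finite E] (D : Subgroup E) (hD : D.index = 2)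
    (hiso : Nonempty (D ≃* DihedralGroup (2 ^ (d - 1)))) :
    ∃ hN : (⁅D, D⁆ : Subgroup E).Normal,
      haveI := hN
      ∃ C : Subgroup (E ⧸ (⁅D, D⁆ : Subgroup E)),
        Subgroup.IsComplement'
          (D.map (QuotientGroup.mk' (⁅D, D⁆ : Subgroup E))) C :=
  dihedral_index_two_extension_splits_mod_commutator_general d hd E D hD hiso
end

section
/- Let d ≥ 4 and let D be the dihedral group of order 2^d. Then the outer automorphism group of D, i.e. the quotient of Aut(D) by the image of the conjugation homomorphism D → Aut(D) (the inner automorphism group), is isomorphic to C₂ × C_{2^{d−3}}. -/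
instance innerAutNormal (G : Type*) [Group G] :
    ((MulAut.conj : G →* MulAut G).range).Normal := by
  constructor
  rintro f ⟨g, rfl⟩ φ
  refine ⟨φ g, ?_⟩
  ext x
  simp [MulAut.conj_apply, MulAut.mul_apply, map_mul, MulAut.inv_apply_self,
    ← map_inv]

/-!
For `n ≠ 2` every automorphism of `D_n` has the form `r i ↦ r (k * i)`, `sr i ↦ sr (m + k * i)`
with `k` a unit of `ZMod n`: it must send `r 1` to an element of order `n`, hence to a rotation,
and it cannot send the reflection `sr 0` to a rotation. Conjugation by `r a` and by `sr a` has
parameters `(k, m) = (1, -2a)` and `(-1, 2a)`. So for even `n` the map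
`(k, m) ↦ (m mod 2, k mod ±1)` is a surjective homomorphism `Aut(D_n) → C₂ × (ZMod n)ˣ/{±1}`
whose kernel is exactly the group of inner automorphisms.

For `n = 2^(e+2)` the group `(ZMod n)ˣ/{±1}` has order `2^e` and is cyclic, generated by the
class of `5`: the unit `5` has order `2^e`, and none of its powers is `-1` since `5 ≡ 1 mod 4`.
-/

lemma Subgroup.mem_zpowers_neg_one_iff {G : Type*} [Group G] [HasDistribNeg G] {g : G} :
    g ∈ Subgroup.zpowers (-1 : G) ↔ g = 1 ∨ g = -1 := by
  constructor
  · rintro ⟨k, rfl⟩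
    rcases Int.even_or_odd k with hk | hk
    exacts [.inl hk.neg_one_zpow, .inr hk.neg_one_zpow]
  · rintro (rfl | rfl)
    exacts [one_mem _, Subgroup.mem_zpowers _]

lemma ZMod.exists_eq_two_mul_of_castHom_eq_zero {n : ℕ} (h2 : 2 ∣ n) {m : ZMod n}
    (h : ZMod.castHom h2 (ZMod 2) m = 0) : ∃ t, m = 2 * t := by
  obtain ⟨t, ht⟩ : ((2 : ℕ) : ℤ) ∣ m.cast := by
    rwa [← ZMod.intCast_zmod_eq_zero_iff_dvd, ← map_intCast (ZMod.castHom h2 (ZMod 2)),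
      ZMod.intCast_zmod_cast]
  refine ⟨t, ?_⟩
  rw [← ZMod.intCast_zmod_cast m, ht, Int.cast_mul, Int.cast_natCast, Nat.cast_ofNat]

lemma ZMod.castHom_two_mul_eq_zero {n : ℕ} (h2 : 2 ∣ n) (a : ZMod n) :
    ZMod.castHom h2 (ZMod 2) (2 * a) = 0 := by
  rw [map_mul, map_ofNat]
  exact zero_mul _

lemma QuotientGroup.orderOf_mk_eq_orderOf {G : Type*} [Group G] {H : Subgroup G} [H.Normal]
    {g : G} (h : ∀ k : ℕ, g ^ k ∈ H → g ^ k = 1) : orderOf (g : G ⧸ H) = orderOf g := by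
  refine orderOf_eq_orderOf_iff.mpr fun k => ?_
  rw [← QuotientGroup.mk_pow, QuotientGroup.eq_one_iff]
  exact ⟨h k, fun hk => hk ▸ H.one_mem⟩

namespace ZMod

variable (e : ℕ)

lemma card_units_two_pow_succ : Nat.card (ZMod (2 ^ (e + 1)))ˣ = 2 ^ e := by
  rw [Nat.card_eq_fintype_card, card_units_eq_totient, Nat.totient_prime_pow_succ Nat.prime_two,
    Nat.add_one_sub_one, mul_one]

lemma orderOf_neg_one_units_two_pow : orderOf (-1 : (ZMod (2 ^ (e + 2)))ˣ) = 2 := by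
  have : Fact (1 < 2 ^ (e + 2)) := ⟨Nat.one_lt_two_pow (by omega)⟩
  rw [← orderOf_units, Units.coe_neg_one, orderOf_neg_one, ringChar_zmod_n, if_neg]
  have : 2 ^ 2 ≤ 2 ^ (e + 2) := Nat.pow_le_pow_right two_pos (by omega)
  omega

lemma pow_five_ne_neg_one (k : ℕ) : (5 : ZMod (2 ^ (e + 2))) ^ k ≠ -1 := by
  intro h
  have h4 : 4 ∣ 2 ^ (e + 2) := pow_dvd_pow 2 (by omega : 2 ≤ e + 2)
  have := congrArg (castHom h4 (ZMod 4)) h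
  rw [map_pow, map_neg, map_one, map_ofNat, show (5 : ZMod 4) = 1 from rfl, one_pow] at this
  exact absurd this (by decide)

lemma card_units_two_pow_quot_zpowers_neg_one :
    Nat.card ((ZMod (2 ^ (e + 2)))ˣ ⧸ Subgroup.zpowers (-1)) = 2 ^ e := by
  have h := Subgroup.card_eq_card_quotient_mul_card_subgroup
    (Subgroup.zpowers (-1 : (ZMod (2 ^ (e + 2)))ˣ))
  rw [card_units_two_pow_succ, Nat.card_zpowers, orderOf_neg_one_units_two_pow, pow_succ] at h
  exact (Nat.eq_of_mul_eq_mul_right two_pos h).symm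

lemma orderOf_five_units_two_pow_quot_zpowers_neg_one :
    orderOf ((unitOfCoprime 5 (Nat.Coprime.pow_right _ (by norm_num)) : (ZMod (2 ^ (e + 2)))ˣ) :
      (ZMod (2 ^ (e + 2)))ˣ ⧸ Subgroup.zpowers (-1)) = 2 ^ e := by
  rw [QuotientGroup.orderOf_mk_eq_orderOf, ← orderOf_units, coe_unitOfCoprime, Nat.cast_ofNat,
    orderOf_five]
  intro k hk
  refine (Subgroup.mem_zpowers_neg_one_iff.mp hk).resolve_right fun h => pow_five_ne_neg_one e k ?_
  simpa using congrArg Units.val h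

noncomputable def unitsTwoPowQuotNegOneEquiv :
    ((ZMod (2 ^ (e + 2)))ˣ ⧸ Subgroup.zpowers (-1)) ≃* Multiplicative (ZMod (2 ^ e)) :=
  have := isCyclic_of_orderOf_eq_card _ ((orderOf_five_units_two_pow_quot_zpowers_neg_one e).trans
    (card_units_two_pow_quot_zpowers_neg_one e).symm)
  mulEquivOfCyclicCardEq <| (card_units_two_pow_quot_zpowers_neg_one e).trans
    ((Nat.card_zmod _).symm.trans (Nat.card_congr Multiplicative.toAdd).symm)

end ZMod

namespace DihedralGroup

variable {n : ℕ}

def index : DihedralGroup n → ZMod n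
  | r i => i
  | sr i => i

lemma r_eq_r_one_zpow (i : ZMod n) : r i = r 1 ^ (i.cast : ℤ) := by
  rw [r_one_zpow, ZMod.intCast_zmod_cast]

lemma sr_eq_sr_zero_mul_r (i : ZMod n) : sr i = sr 0 * r i := by
  rw [sr_mul_r, zero_add]

section Endomorphism

variable {F : Type*} [FunLike F (DihedralGroup n) (DihedralGroup n)]
  [MonoidHomClass F (DihedralGroup n) (DihedralGroup n)] (φ : F) {k m : ZMod n}

lemma map_r_of_map_r_one (h : φ (r 1) = r k) (i : ZMod n) : φ (r i) = r (k * i) := by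
  rw [r_eq_r_one_zpow i, map_zpow, h, r_zpow, ZMod.intCast_zmod_cast]

lemma map_sr_of_map_sr_zero (h1 : φ (r 1) = r k) (h0 : φ (sr 0) = sr m) (i : ZMod n) :
    φ (sr i) = sr (m + k * i) := by
  rw [sr_eq_sr_zero_mul_r, map_mul, h0, map_r_of_map_r_one φ h1, sr_mul_r]

end Endomorphism

def affineAut (k : (ZMod n)ˣ) (m : ZMod n) : MulAut (DihedralGroup n) where
  toFun
    | r i => r (k * i)
    | sr i => sr (m + k * i)
  invFun
    | r i => r (↑k⁻¹ * i)
    | sr i => sr (↑k⁻¹ * (i - m))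
  left_inv := by rintro (i | i) <;> simp [← mul_assoc]
  right_inv := by rintro (i | i) <;> simp [← mul_assoc, mul_sub]
  map_mul' := by
    rintro (i | i) (j | j) <;> simp only [r_mul_r, r_mul_sr, sr_mul_r, sr_mul_sr] <;> ring_nf

@[simp] lemma affineAut_r (k : (ZMod n)ˣ) (m i : ZMod n) :
    affineAut k m (r i) = r ((k : ZMod n) * i) := rfl

@[simp] lemma affineAut_sr (k : (ZMod n)ˣ) (m i : ZMod n) :
    affineAut k m (sr i) = sr (m + (k : ZMod n) * i) := rfl

lemma affineAut_mul (k l : (ZMod n)ˣ) (m p : ZMod n) :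
    affineAut k m * affineAut l p = affineAut (k * l) (m + (k : ZMod n) * p) := by
  ext (i | i) <;> simp only [MulAut.mul_apply, affineAut_r, affineAut_sr, Units.val_mul] <;> ring_nf

lemma mulAut_conj_r (a : ZMod n) : MulAut.conj (r a) = affineAut 1 (-(2 * a)) := by
  ext (i | i) <;> simp only [MulAut.conj_apply, inv_r, r_mul_r, r_mul_sr, sr_mul_r, affineAut_r,
    affineAut_sr, Units.val_one] <;> ring_nf

lemma mulAut_conj_sr (a : ZMod n) : MulAut.conj (sr a) = affineAut (-1) (2 * a) := by
  ext (i | i) <;> simp only [MulAut.conj_apply, inv_sr, r_mul_sr, sr_mul_r, sr_mul_sr, affineAut_r,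
    affineAut_sr, Units.val_neg, Units.val_one] <;> ring_nf

lemma exists_mulAut_apply_r_one (hn : n ≠ 2) (φ : MulAut (DihedralGroup n)) :
    ∃ k, φ (r 1) = r k := by
  cases h : φ (r 1) with
  | r k => exact ⟨k, rfl⟩
  | sr i =>
    have := φ.orderOf_eq (r 1)
    rw [h, orderOf_sr, orderOf_r_one] at this
    exact absurd this.symm hn

-- `φ` maps rotations to rotations, so a rotation `φ (sr 0)` would make `φ` miss all reflections.
lemma exists_mulAut_apply_sr_zero (hn : n ≠ 2) (φ : MulAut (DihedralGroup n)) :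
    ∃ m, φ (sr 0) = sr m := by
  obtain ⟨k, hk⟩ := exists_mulAut_apply_r_one hn φ
  cases h0 : φ (sr 0) with
  | sr m => exact ⟨m, rfl⟩
  | r j =>
    obtain ⟨x, hx⟩ := φ.surjective (sr 0)
    cases x with
    | r i => rw [map_r_of_map_r_one φ hk] at hx; cases hx
    | sr i =>
      rw [sr_eq_sr_zero_mul_r, map_mul, h0, map_r_of_map_r_one φ hk, r_mul_r] at hx
      cases hx

lemma exists_eq_affineAut (hn : n ≠ 2) (φ : MulAut (DihedralGroup n)) :
    ∃ k m, φ = affineAut k m := by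
  obtain ⟨k, hk⟩ := exists_mulAut_apply_r_one hn φ
  obtain ⟨l, hl⟩ := exists_mulAut_apply_r_one hn φ⁻¹
  obtain ⟨m, hm⟩ := exists_mulAut_apply_sr_zero hn φ
  have hkl : k * l = 1 := by
    have := congrArg φ hl
    rwa [MulAut.apply_inv_self, map_r_of_map_r_one φ hk, eq_comm, r.injEq] at this
  refine ⟨Units.mkOfMulEqOne k l hkl, m, MulEquiv.ext fun x => ?_⟩
  cases x with
  | r i => exact map_r_of_map_r_one φ hk i
  | sr i => exact map_sr_of_map_sr_zero φ hk hm i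

section Automorphism

variable (hn : n ≠ 2)

def rotationFactor : MulAut (DihedralGroup n) →* ZMod n where
  toFun φ := index (φ (r 1))
  map_one' := rfl
  map_mul' φ ψ := by
    obtain ⟨k, m, rfl⟩ := exists_eq_affineAut hn φ
    obtain ⟨l, p, rfl⟩ := exists_eq_affineAut hn ψ
    simp [affineAut_mul, index]

def rotationUnit : MulAut (DihedralGroup n) →* (ZMod n)ˣ :=
  (Units.map (rotationFactor hn)).comp toUnits.toMonoidHom

@[simp] lemma rotationUnit_affineAut (k : (ZMod n)ˣ) (m : ZMod n) :
    rotationUnit hn (affineAut k m) = k :=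
  Units.ext (by simp [rotationUnit, rotationFactor, index])

variable (h2 : 2 ∣ n)

def reflectionParity : MulAut (DihedralGroup n) →* Multiplicative (ZMod 2) where
  toFun φ := .ofAdd (ZMod.castHom h2 (ZMod 2) (index (φ (sr 0))))
  map_one' := by simp [index]
  map_mul' φ ψ := by
    obtain ⟨k, m, rfl⟩ := exists_eq_affineAut hn φ
    obtain ⟨l, p, rfl⟩ := exists_eq_affineAut hn ψ
    have hk : ZMod.castHom h2 (ZMod 2) k = 1 := by
      rw [ZMod.castHom_apply, ← ZMod.unitsMap_val h2, Subsingleton.elim (ZMod.unitsMap h2 k) 1,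
        Units.val_one]
    rw [affineAut_mul]
    simp only [affineAut_sr, mul_zero, add_zero, index, map_add, map_mul, hk, one_mul, ofAdd_add]

@[simp] lemma reflectionParity_affineAut (k : (ZMod n)ˣ) (m : ZMod n) :
    reflectionParity hn h2 (affineAut k m) = .ofAdd (ZMod.castHom h2 (ZMod 2) m) := by
  simp [reflectionParity, index]

def outerInvariant :
    MulAut (DihedralGroup n) →* Multiplicative (ZMod 2) × ((ZMod n)ˣ ⧸ Subgroup.zpowers (-1)) :=
  (reflectionParity hn h2).prod ((QuotientGroup.mk' _).comp (rotationUnit hn))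

lemma outerInvariant_surjective : Function.Surjective (outerInvariant hn h2) := by
  rintro ⟨c, q⟩
  obtain ⟨k, rfl⟩ := QuotientGroup.mk_surjective q
  refine ⟨affineAut k (c.toAdd.val : ZMod n), ?_⟩
  simp [outerInvariant]

lemma outerInvariant_affineAut_eq_one_iff (k : (ZMod n)ˣ) (m : ZMod n) :
    outerInvariant hn h2 (affineAut k m) = 1 ↔
      ZMod.castHom h2 (ZMod 2) m = 0 ∧ (k = 1 ∨ k = -1) := by
  simp only [outerInvariant, MonoidHom.prod_apply, MonoidHom.comp_apply,
    reflectionParity_affineAut, rotationUnit_affineAut, QuotientGroup.mk'_apply, Prod.mk_eq_one,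
    ofAdd_eq_one, QuotientGroup.eq_one_iff, Subgroup.mem_zpowers_neg_one_iff]

lemma ker_outerInvariant :
    (outerInvariant hn h2).ker = (MulAut.conj : DihedralGroup n →* _).range := by
  refine le_antisymm (fun φ hφ => ?_) ?_
  · obtain ⟨k, m, rfl⟩ := exists_eq_affineAut hn φ
    obtain ⟨hm, hk⟩ := (outerInvariant_affineAut_eq_one_iff hn h2 k m).mp hφ
    obtain ⟨t, rfl⟩ := ZMod.exists_eq_two_mul_of_castHom_eq_zero h2 hm
    rcases hk with rfl | rfl
    · exact ⟨r (-t), by rw [mulAut_conj_r, mul_neg, neg_neg]⟩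
    · exact ⟨sr t, mulAut_conj_sr t⟩
  · rintro _ ⟨g, rfl⟩
    rw [MonoidHom.mem_ker]
    cases g with
    | r a =>
      rw [mulAut_conj_r, outerInvariant_affineAut_eq_one_iff, map_neg,
        ZMod.castHom_two_mul_eq_zero, neg_zero]
      exact ⟨rfl, .inl rfl⟩
    | sr a =>
      rw [mulAut_conj_sr, outerInvariant_affineAut_eq_one_iff, ZMod.castHom_two_mul_eq_zero]
      exact ⟨rfl, .inr rfl⟩

noncomputable def outerAutEquiv :
    MulAut (DihedralGroup n) ⧸ (MulAut.conj : DihedralGroup n →* _).range ≃*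
      Multiplicative (ZMod 2) × ((ZMod n)ˣ ⧸ Subgroup.zpowers (-1)) :=
  (QuotientGroup.quotientMulEquivOfEq (ker_outerInvariant hn h2).symm).trans
    -- elaboration cannot recover the product's `Group` instance from its `MulOneClass` instance
    (@QuotientGroup.quotientKerEquivOfSurjective _ _ _ Prod.instGroup (outerInvariant hn h2)
      (outerInvariant_surjective hn h2))

end Automorphism

end DihedralGroup

/-- Let `d ≥ 4` and let `D` be the dihedral group of order `2^d`.  Then the outer
automorphism group of `D`, i.e. the quotient of `Aut(D)` by the image of the
conjugation homomorphism `D → Aut(D)`, is isomorphic to `C₂ × C_(2^(d-3))`. -/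
theorem outer_automorphism_group_of_dihedral (d : ℕ) (hd : 4 ≤ d) :
    Nonempty
      ((MulAut (DihedralGroup (2 ^ (d - 1))) ⧸
          (MulAut.conj : DihedralGroup (2 ^ (d - 1)) →*
            MulAut (DihedralGroup (2 ^ (d - 1)))).range) ≃*
        Multiplicative (ZMod 2) × Multiplicative (ZMod (2 ^ (d - 3)))) := by
  obtain ⟨e, rfl⟩ : ∃ e, d = e + 3 := ⟨d - 3, by omega⟩
  have hn : 2 ^ (e + 2) ≠ 2 := by
    have : 2 ^ 2 ≤ 2 ^ (e + 2) := Nat.pow_le_pow_right two_pos (by omega)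
    omega
  have h2 : 2 ∣ 2 ^ (e + 2) := dvd_pow_self 2 (by omega)
  exact ⟨(DihedralGroup.outerAutEquiv hn h2).trans
    ((MulEquiv.refl _).prodCongr (ZMod.unitsTwoPowQuotNegOneEquiv e))⟩
end

section
/- Let d ≥ 4 and let D = ⟨s, t ∣ s^{2^{d−1}} = t² = (st)² = 1⟩ be the dihedral group of order 2^d, with central involution s₁ = s^{2^{d−2}}. Then there is no group E containing D as a subgroup of index 2 together with an element e ∈ E ∖ D such that conjugation by e satisfies e s e⁻¹ = s₁ s⁻¹ and e t e⁻¹ = s⁻¹ t. Equivalently: no automorphism of D of the form s ↦ s^{2^{d−2}−1}, t ↦ s^{−1} t is induced by an element of a degree-2 extension of D. -/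
/-!
Conjugation by `e` acts on `D` through the endomorphism `φ : r i ↦ r (c i), sr i ↦ sr (c i + 1)`
with `c = 2N - 1`, `N = 2^(d-3)` (so `s₁ = r (2N)`). As `D` has index `2`, `y := e²` lies in `D`;
`φ` fixes `y`, and conjugation by `y` acts as `φ²`. A reflection `y` would invert `r 1`, which `φ²`
fixes. A rotation `y = r i` would satisfy `-2i = 2N` (from `φ² (sr 0) = sr (2N)`) and `2N i = 2i`
(from `φ y = y`); multiplying the first relation by `N` gives `2N = 2N²`, but `2N ≠ 0` while
`2N² = 2^(2d-5)` vanishes modulo `2^(d-1)` once `d ≥ 4`.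
-/

theorem ZMod.two_pow_eq_zero_iff {j k : ℕ} : (2 : ZMod (2 ^ k)) ^ j = 0 ↔ k ≤ j := by
  rw [← Nat.pow_dvd_pow_iff_le_right one_lt_two, ← ZMod.natCast_eq_zero_iff, Nat.cast_pow,
    Nat.cast_ofNat]

theorem exists_fixed_conj_eq_sq_of_mul_self_mem {D E : Type*} [Group D] [Group E]
    (ι : D →* E) (hι : Function.Injective ι) (φ : D →* D) (e : E)
    (hφ : ∀ g, e * ι g * e⁻¹ = ι (φ g)) (he : e * e ∈ ι.range) :
    ∃ y, φ y = y ∧ ∀ g, y * g * y⁻¹ = φ (φ g) := by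
  obtain ⟨y, hy⟩ := he
  refine ⟨y, hι ?_, fun g => hι ?_⟩
  · rw [← hφ, hy]
    group
  · rw [← hφ, ← hφ, map_mul, map_mul, map_inv, hy]
    group

namespace DihedralGroup

variable {n : ℕ}

@[ext]
theorem hom_ext {G : Type*} [Group G] {f g : DihedralGroup n →* G}
    (hr : f (r 1) = g (r 1)) (hsr : f (sr 0) = g (sr 0)) : f = g := by
  have hr' : ∀ i, f (r i) = g (r i) := fun i => by
    rw [← ZMod.intCast_zmod_cast i, ← r_one_zpow, map_zpow, map_zpow, hr]
  ext (i | i)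
  · exact hr' i
  · rw [show sr i = sr 0 * r i by rw [sr_mul_r, zero_add], map_mul, map_mul, hsr, hr']

def affineHom (c b : ZMod n) : DihedralGroup n →* DihedralGroup n where
  toFun
    | r i => r (c * i)
    | sr i => sr (c * i + b)
  map_one' := congrArg r (mul_zero c)
  map_mul' := by
    rintro (i | i) (j | j) <;>
      simp only [r_mul_r, r_mul_sr, sr_mul_r, sr_mul_sr, r.injEq, sr.injEq] <;> ring

@[simp]
theorem affineHom_r (c b i : ZMod n) : affineHom c b (r i) = r (c * i) := rfl

@[simp]
theorem affineHom_sr (c b i : ZMod n) : affineHom c b (sr i) = sr (c * i + b) := rfl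

theorem not_exists_fixed_conj_eq_affineHom_sq (N : ZMod n) (hsq : 2 * N * N = 0)
    (hne : 2 * N ≠ 0) :
    ¬ ∃ y, affineHom (2 * N - 1) 1 y = y ∧
      ∀ g, y * g * y⁻¹ = affineHom (2 * N - 1) 1 (affineHom (2 * N - 1) 1 g) := by
  rintro ⟨i | i, hfix, hconj⟩
  · have h2i := hconj (sr 0)
    simp only [affineHom_r, affineHom_sr, inv_r, r_mul_sr, sr_mul_r, sr.injEq, r.injEq] at h2i hfix
    exact hne (by linear_combination (N - 1) * h2i + hfix + hsq)
  · have hinv := hconj (r 1)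
    simp only [affineHom_r, inv_sr, sr_mul_r, sr_mul_sr, r.injEq] at hinv
    exact hne (by linear_combination -N * hinv + (2 - 2 * N) * hsq)

theorem conj_eq_of_conj_generators {E : Type*} [Group E]
    (ι : DihedralGroup n →* E) (φ : DihedralGroup n →* DihedralGroup n) (e : E)
    (hr : e * ι (r 1) * e⁻¹ = ι (φ (r 1)))
    (hsr : e * ι (sr 0) * e⁻¹ = ι (φ (sr 0))) (g : DihedralGroup n) :
    e * ι g * e⁻¹ = ι (φ g) :=
  DFunLike.congr_fun (f := (MulAut.conj e).toMonoidHom.comp ι) (g := ι.comp φ)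
    (hom_ext hr hsr) g

end DihedralGroup

open DihedralGroup

/-- Let `d ≥ 4` and let `D = ⟨s, t ∣ s^(2^(d-1)) = t² = (st)² = 1⟩` be the dihedral group
of order `2^d` (so `s = DihedralGroup.r 1`, `t = DihedralGroup.sr 0`), with central
involution `s₁ = s^(2^(d-2)) = DihedralGroup.r (2^(d-2))`.  Then there is no group `E`
containing `D` as a subgroup of index `2` together with an element `e ∈ E ∖ D` such that
conjugation by `e` satisfies `e s e⁻¹ = s₁ s⁻¹` and `e t e⁻¹ = s⁻¹ t`. -/
theorem no_degree_two_extension_with_forbidden_action (d : ℕ) (hd : 4 ≤ d) :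
    ¬ ∃ (E : Type) (_ : Group E) (ι : DihedralGroup (2 ^ (d - 1)) →* E) (e : E),
        Function.Injective ι ∧
        ι.range.index = 2 ∧
        e ∉ ι.range ∧
        e * ι (DihedralGroup.r 1) * e⁻¹ =
          ι (DihedralGroup.r ((2 ^ (d - 2) : ℕ) : ZMod (2 ^ (d - 1))) *
              (DihedralGroup.r 1)⁻¹) ∧
        e * ι (DihedralGroup.sr 0) * e⁻¹ =
          ι ((DihedralGroup.r 1)⁻¹ * DihedralGroup.sr 0) := by
  rintro ⟨E, _, ι, e, hι, hidx, -, hr, hsr⟩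
  set N : ZMod (2 ^ (d - 1)) := 2 ^ (d - 3)
  have hs₁ : ((2 ^ (d - 2) : ℕ) : ZMod (2 ^ (d - 1))) = 2 * N := by
    rw [Nat.cast_pow, Nat.cast_ofNat, ← pow_succ']
    congr 1
    omega
  have hconj := conj_eq_of_conj_generators ι (affineHom (2 * N - 1) 1) e
    (by rw [hr, hs₁, inv_r, r_mul_r, affineHom_r]; ring_nf)
    (by rw [hsr, inv_r, r_mul_sr, affineHom_sr]; ring_nf)
  refine not_exists_fixed_conj_eq_affineHom_sq N ?_ ?_ <|
    exists_fixed_conj_eq_sq_of_mul_self_mem ι hι _ e hconj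
      (Subgroup.mul_self_mem_of_index_two hidx e)
  · rw [← pow_succ', ← pow_add, ZMod.two_pow_eq_zero_iff]
    omega
  · rw [← pow_succ', Ne, ZMod.two_pow_eq_zero_iff]
    omega
end
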